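/- A real quadratic irrational ϖ with Galois conjugate ϖ′ satisfies ϖ > 1 > ϖ′ > 0 if and only if its minus continued fraction expansion is purely periodic. -/

import Mathlib

/-!
Write `ϖ = (P + √D) / Q` with `Q ∣ P² - D`. The step `ϖ ↦ 1 / (⌈ϖ⌉ - ϖ)` of the minus expansion
acts on such pairs `(P, Q)` and preserves reducedness (`ϖ > 1 > ϖ' > 0`). Reduced pairs are
bounded, hence finitely many, and on them the step is injective, since the previous digit is
`⌈1 / ϖ'⌉` for the next conjugate `ϖ'`. So the orbit of a reduced `ϖ` is purely periodic, and its
convergents converge geometrically because all tails stay above the least reduced value, which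
is `> 1`.

Conversely, a purely periodic expansion makes `ϖ` a fixed point of the Möbius map
`t ↦ (A t - B) / (C t - E)` of one period, where `0 ≤ E < B` and `0 < C - E ≤ A - B`. Hence `ϖ` and
(by conjugation) `ϖ'` are the roots of `C t² - (A + E) t + B`, which is positive at `0` and
non-positive at `1`; as `ϖ > 1`, this puts `ϖ'` in `(0, 1)`.
-/

noncomputable def mcfList : List ℤ → ℝ
  | [] => 0
  | b :: l => (b : ℝ) - 1 / mcfList l

noncomputable def mcfConv (b : ℕ → ℤ) (k : ℕ) : ℝ :=
  mcfList ((List.range (k + 1)).map b)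

open Filter Topology

-- `1 / 0 = 0` in Lean, so the empty tail contributes nothing.
@[simp] lemma mcfList_singleton (a : ℤ) : mcfList [a] = a := by
  simp [mcfList]

lemma one_lt_mcfList {l : List ℤ} (hne : l ≠ []) (hl : ∀ a ∈ l, 2 ≤ a) : 1 < mcfList l := by
  induction l with
  | nil => exact absurd rfl hne
  | cons a l ih =>
    have ha : (2 : ℝ) ≤ a := by exact_mod_cast hl a List.mem_cons_self
    rcases eq_or_ne l [] with rfl | hl'
    · simp only [mcfList_singleton]; linarith
    · have h1 : 1 < mcfList l := ih hl' fun x hx => hl x (List.mem_cons_of_mem a hx)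
      have : 1 / mcfList l < 1 := (div_lt_one (by linarith)).2 h1
      simp only [mcfList]; linarith

lemma one_lt_mcfConv {b : ℕ → ℤ} (hb : ∀ i, 2 ≤ b i) (k : ℕ) : 1 < mcfConv b k :=
  one_lt_mcfList (by simp) (by simpa using fun i _ => hb i)

lemma mcfConv_zero (b : ℕ → ℤ) : mcfConv b 0 = b 0 := by
  simp [mcfConv]

lemma mcfConv_succ (b : ℕ → ℤ) (k : ℕ) :
    mcfConv b (k + 1) = b 0 - 1 / mcfConv (fun i => b (i + 1)) k := by
  simp [mcfConv, List.range_succ_eq_map, mcfList, Function.comp_def]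

lemma mcfConv_add_period {b : ℕ → ℤ} {m : ℕ} (hper : ∀ k, b (k + m) = b k) (k : ℕ) :
    mcfConv b (k + m) = mcfList ((List.range m).map b ++ (List.range (k + 1)).map b) := by
  rw [mcfConv, show k + m + 1 = m + (k + 1) by omega, List.range_add, List.map_append,
    List.map_map]
  congr 2
  exact List.map_congr_left fun i _ => by simp [add_comm m i, hper]

lemma one_le_of_tendsto_mcfConv {b : ℕ → ℤ} {ϖ : ℝ} (hb : ∀ i, 2 ≤ b i)
    (hlim : Tendsto (mcfConv b) atTop (𝓝 ϖ)) : 1 ≤ ϖ :=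
  ge_of_tendsto' hlim fun k => (one_lt_mcfConv hb k).le

lemma exists_mcfList_append_eq_mobius {l : List ℤ} (hne : l ≠ []) (hl : ∀ a ∈ l, 2 ≤ a) :
    ∃ A B C E : ℤ, 0 ≤ E ∧ E < B ∧ 0 < C - E ∧ C - E ≤ A - B ∧
      ∀ l', 1 < mcfList l' →
        mcfList (l ++ l') = (A * mcfList l' - B) / (C * mcfList l' - E) := by
  obtain ⟨a, l, rfl⟩ := List.exists_cons_of_ne_nil hne
  induction l generalizing a with
  | nil =>
    have ha : 2 ≤ a := hl a List.mem_cons_self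
    refine ⟨a, 1, 1, 0, by omega, by omega, by omega, by omega, fun l' hl' => ?_⟩
    have : mcfList l' ≠ 0 := by linarith
    simp only [List.cons_append, List.nil_append, mcfList]
    push_cast
    field_simp
    ring
  | cons c l ih =>
    have ha : 2 ≤ a := hl a List.mem_cons_self
    obtain ⟨A, B, C, E, hE, hEB, hCE, hCEAB, heq⟩ :=
      ih c (List.cons_ne_nil _ _) fun x hx => hl x (List.mem_cons_of_mem a hx)
    refine ⟨a * A - C, a * B - E, A, B, by omega, by nlinarith, by omega, by nlinarith,
      fun l' hl' => ?_⟩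
    have hden : 0 < (A : ℝ) * mcfList l' - B := by
      have hAB : (1 : ℝ) ≤ A - B := by exact_mod_cast (by omega : 1 ≤ A - B)
      have hA : (0 : ℝ) ≤ A := by exact_mod_cast (by omega : 0 ≤ A)
      nlinarith
    rw [List.cons_append, mcfList, heq l' hl', one_div_div]
    push_cast
    rw [eq_div_iff hden.ne', sub_mul, div_mul_cancel₀ _ hden.ne']
    ring

lemma two_le_of_eq_sub_one_div {a : ℤ} {u v : ℝ} (hu : 1 < u) (hv : 0 < v)
    (h : u = a - 1 / v) : 2 ≤ a := by
  have : (1 : ℝ) < a := by have := one_div_pos.2 hv; linarith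
  exact_mod_cast this

section Tails

variable {b : ℕ → ℤ} {w : ℕ → ℝ} {ρ : ℝ}

lemma abs_sub_mcfConv_le (hρ : 1 < ρ) (hw : ∀ k, ρ ≤ w k)
    (hrec : ∀ k, w k = b k - 1 / w (k + 1)) (k : ℕ) : |w 0 - mcfConv b k| ≤ ρ⁻¹ ^ k := by
  induction k generalizing b w with
  | zero =>
    have : 0 < 1 / w 1 := one_div_pos.2 (by linarith [hw 1])
    have : 1 / w 1 ≤ 1 := (div_le_one (by linarith [hw 1])).2 (by linarith [hw 1])
    rw [mcfConv_zero, hrec 0, zero_add, pow_zero, abs_le]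
    constructor <;> nlinarith [hw 1]
  | succ k ih =>
    have hb : ∀ i, 2 ≤ b (i + 1) := fun i =>
      two_le_of_eq_sub_one_div (by linarith [hw (i + 1)]) (by linarith [hw (i + 2)]) (hrec _)
    set c := mcfConv (fun i => b (i + 1)) k
    have hc : 1 < c := one_lt_mcfConv hb k
    have hw1 : ρ ≤ w 1 := hw 1
    have hstep : mcfConv b (k + 1) = b 0 - 1 / c := mcfConv_succ b k
    have hc0 : c ≠ 0 := by linarith
    have hw10 : w 1 ≠ 0 := by linarith
    calc |w 0 - mcfConv b (k + 1)| = |w 1 - c| / (c * w 1) := by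
          rw [hstep, hrec 0, ← abs_of_pos (by nlinarith : 0 < c * w 1), ← abs_div]
          congr 1
          field_simp
          ring
      _ ≤ |w 1 - c| / ρ := by gcongr; nlinarith
      _ ≤ ρ⁻¹ ^ k / ρ := by gcongr; exact ih (fun i => hw (i + 1)) fun i => hrec (i + 1)
      _ = ρ⁻¹ ^ (k + 1) := by rw [pow_succ, div_eq_mul_inv]

lemma tendsto_mcfConv_of_tails (hρ : 1 < ρ) (hw : ∀ k, ρ ≤ w k)
    (hrec : ∀ k, w k = b k - 1 / w (k + 1)) : Tendsto (mcfConv b) atTop (𝓝 (w 0)) := by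
  have hgeom : Tendsto (fun k => ρ⁻¹ ^ k) atTop (𝓝 0) :=
    tendsto_pow_atTop_nhds_zero_of_lt_one (by positivity) (inv_lt_one_of_one_lt₀ hρ)
  rw [tendsto_iff_dist_tendsto_zero]
  refine squeeze_zero (fun _ => dist_nonneg) (fun k => ?_) hgeom
  rw [dist_comm, Real.dist_eq]
  exact abs_sub_mcfConv_le hρ hw hrec k

end Tails

lemma exists_quadratic_of_periodic {b : ℕ → ℤ} {m : ℕ} {ϖ : ℝ} (hm : 0 < m)
    (hb : ∀ i, 2 ≤ b i) (hper : ∀ k, b (k + m) = b k)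
    (hlim : Tendsto (mcfConv b) atTop (𝓝 ϖ)) :
    ∃ α β γ : ℤ, 0 < α ∧ 0 < γ ∧ α + γ ≤ β ∧ α * ϖ ^ 2 - β * ϖ + γ = 0 := by
  obtain ⟨A, B, C, E, hE, hEB, hCE, hCEAB, heq⟩ :=
    exists_mcfList_append_eq_mobius (l := (List.range m).map b) (by simpa using hm.ne')
      (by simpa using fun i _ => hb i)
  have hden : 0 < (C : ℝ) * ϖ - E := by
    have hCE' : (1 : ℝ) ≤ C - E := by exact_mod_cast (by omega : 1 ≤ C - E)
    have hC : (0 : ℝ) ≤ C := by exact_mod_cast (by omega : 0 ≤ C)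
    nlinarith [one_le_of_tendsto_mcfConv hb hlim]
  have hshift : Tendsto (fun k => mcfConv b (k + m)) atTop (𝓝 ϖ) :=
    hlim.comp (tendsto_add_atTop_nat m)
  have hmob : Tendsto (fun k => mcfConv b (k + m)) atTop (𝓝 ((A * ϖ - B) / (C * ϖ - E))) := by
    have := ((hlim.const_mul (A : ℝ)).sub_const (B : ℝ)).div
      ((hlim.const_mul (C : ℝ)).sub_const (E : ℝ)) hden.ne'
    refine this.congr fun k => ?_
    rw [mcfConv_add_period hper, heq _ (one_lt_mcfConv hb k)]
    rfl
  have hfix : ϖ * (C * ϖ - E) = A * ϖ - B :=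
    (eq_div_iff hden.ne').1 (tendsto_nhds_unique hshift hmob)
  exact ⟨C, A + E, B, by omega, by omega, by omega, by push_cast; linarith⟩

lemma Irrational.eq_zero_of_ratCast_add_mul {s : ℝ} (hs : Irrational s) {u v : ℚ}
    (h : (u : ℝ) + v * s = 0) : u = 0 ∧ v = 0 := by
  have hv : v = 0 := by
    by_contra hv
    refine hs.ne_rat (-u / v) ?_
    push_cast
    field_simp
    linarith
  subst hv
  exact ⟨by simpa using h, rfl⟩

lemma quadratic_eq_zero_conj {d : ℕ} (hd : Irrational √d) {x y α β γ : ℚ}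
    (h : α * (x + y * √d) ^ 2 - β * (x + y * √d) + γ = (0 : ℝ)) :
    α * (x - y * √d) ^ 2 - β * (x - y * √d) + γ = (0 : ℝ) := by
  have hsq : √(d : ℝ) ^ 2 = d := Real.sq_sqrt d.cast_nonneg
  obtain ⟨hu, hv⟩ := hd.eq_zero_of_ratCast_add_mul
    (u := α * (x ^ 2 + y ^ 2 * d) - β * x + γ) (v := 2 * α * x * y - β * y)
    (by push_cast; linear_combination h - α * y ^ 2 * hsq)
  have hu' : (α * (x ^ 2 + y ^ 2 * d) - β * x + γ : ℚ) = (0 : ℝ) := by exact_mod_cast hu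
  have hv' : (2 * α * x * y - β * y : ℚ) = (0 : ℝ) := by exact_mod_cast hv
  push_cast at hu' hv'
  linear_combination hu' - √d * hv' + α * y ^ 2 * hsq

lemma other_root_mem_Ioc {α β γ u v : ℝ} (hα : 0 < α) (hγ : 0 < γ) (hαγ : α + γ ≤ β)
    (hu : 1 < u) (huv : u ≠ v) (hu0 : α * u ^ 2 - β * u + γ = 0)
    (hv0 : α * v ^ 2 - β * v + γ = 0) : v ∈ Set.Ioc 0 1 := by
  have hsum : α * (u + v) = β := by
    have : (u - v) * (α * (u + v) - β) = 0 := by linear_combination hu0 - hv0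
    linarith [(mul_eq_zero.1 this).resolve_left (sub_ne_zero.2 huv)]
  have hprod : α * (u * v) = γ := by linear_combination u * hsum - hu0
  constructor
  · nlinarith
  · by_contra! hv
    nlinarith [mul_pos (mul_pos hα (sub_pos.2 hu)) (sub_pos.2 hv)]

lemma reduced_of_periodic {d : ℕ} (hd : Irrational √(d : ℝ)) {x y : ℚ} (hy : y ≠ 0)
    {b : ℕ → ℤ} {m : ℕ} (hm : 0 < m) (hb : ∀ i, 2 ≤ b i) (hper : ∀ k, b (k + m) = b k)
    (hlim : Tendsto (mcfConv b) atTop (𝓝 (x + y * √d))) :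
    1 < x + y * √d ∧ x - y * √d < 1 ∧ 0 < x - y * √d := by
  have hirr : Irrational (x + y * √d) := (hd.ratCast_mul hy).ratCast_add x
  have hirr' : Irrational (x - y * √d) := by
    simpa only [sub_eq_add_neg, ← neg_mul, Rat.cast_neg] using
      (hd.ratCast_mul (neg_ne_zero.2 hy)).ratCast_add x
  have h1 : 1 < x + y * √d := (one_le_of_tendsto_mcfConv hb hlim).lt_of_ne hirr.ne_one.symm
  have hne : (x + y * √d : ℝ) ≠ x - y * √d := by
    have := mul_ne_zero (Rat.cast_ne_zero.2 hy) hd.ne_zero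
    intro h; apply this; linarith
  obtain ⟨α, β, γ, hα, hγ, hαγ, hroot⟩ := exists_quadratic_of_periodic hm hb hper hlim
  have hroot' := quadratic_eq_zero_conj hd (x := x) (y := y) (α := α) (β := β) (γ := γ)
    (by push_cast; exact hroot)
  push_cast at hroot'
  obtain ⟨h2, h3⟩ := other_root_mem_Ioc (by exact_mod_cast hα) (by exact_mod_cast hγ)
    (by exact_mod_cast hαγ) h1 hne hroot hroot'
  exact ⟨h1, h3.lt_of_ne hirr'.ne_one, h2⟩

namespace MinusCF

/-- `s = (P, Q)` encodes the quadratic irrational `(P + √D) / Q`. -/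
noncomputable def value (D : ℤ) (s : ℤ × ℤ) : ℝ := (s.1 + √D) / s.2

noncomputable def conjValue (D : ℤ) (s : ℤ × ℤ) : ℝ := (s.1 - √D) / s.2

structure Reduced (D : ℤ) (s : ℤ × ℤ) : Prop where
  snd_pos : 0 < s.2
  dvd : s.2 ∣ s.1 ^ 2 - D
  one_lt_value : 1 < value D s
  conjValue_pos : 0 < conjValue D s
  conjValue_lt_one : conjValue D s < 1

noncomputable def digit (D : ℤ) (s : ℤ × ℤ) : ℤ := ⌈value D s⌉

noncomputable def step (D : ℤ) (s : ℤ × ℤ) : ℤ × ℤ :=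
  (digit D s * s.2 - s.1, ((digit D s * s.2 - s.1) ^ 2 - D) / s.2)

variable {D : ℤ} {s : ℤ × ℤ}

lemma mul_step_snd (hdvd : s.2 ∣ s.1 ^ 2 - D) :
    s.2 * (step D s).2 = (step D s).1 ^ 2 - D := by
  refine Int.mul_ediv_cancel' ?_
  have : (digit D s * s.2 - s.1) ^ 2 - D =
      s.2 * (digit D s ^ 2 * s.2 - 2 * digit D s * s.1) + (s.1 ^ 2 - D) := by ring
  rw [this]
  exact dvd_add (dvd_mul_right _ _) hdvd

-- Stated for either square root `r = ±√D`, giving the step for `ϖ` and for `ϖ'` at once.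
lemma step_div_eq {r : ℝ} (hr : Irrational r) (hr2 : r ^ 2 = D) (hQ : s.2 ≠ 0)
    (hdvd : s.2 ∣ s.1 ^ 2 - D) :
    ((step D s).1 + r) / (step D s).2 = 1 / (digit D s - (s.1 + r) / s.2) := by
  have hfst : ((step D s).1 : ℝ) = digit D s * s.2 - s.1 := by simp [step]
  set P' := (step D s).1
  set Q' := (step D s).2
  have hQQ' : (s.2 : ℝ) * Q' = (P' - r) * (P' + r) := by
    have h : s.2 * Q' = P' ^ 2 - D := mul_step_snd hdvd
    have h' : (s.2 : ℝ) * Q' = P' ^ 2 - D := by exact_mod_cast h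
    linear_combination h' + hr2
  have hminus : (P' : ℝ) - r ≠ 0 := sub_ne_zero.2 (hr.ne_int _).symm
  have hplus : (P' : ℝ) + r ≠ 0 := by
    rw [← sub_neg_eq_add]; exact sub_ne_zero.2 (hr.neg.ne_int _).symm
  have hQ' : (Q' : ℝ) ≠ 0 := by
    intro h0; rw [h0, mul_zero] at hQQ'; exact mul_ne_zero hminus hplus hQQ'.symm
  have hQR : (s.2 : ℝ) ≠ 0 := by exact_mod_cast hQ
  have hdiff : (digit D s : ℝ) - (s.1 + r) / s.2 = (P' - r) / s.2 := by
    rw [hfst]; field_simp; ring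
  rw [hdiff, one_div_div, div_eq_div_iff hQ' hminus]
  linear_combination -hQQ'

lemma digit_sub_one_lt_value : (digit D s : ℝ) - 1 < value D s := by
  linarith [show (digit D s : ℝ) < value D s + 1 from Int.ceil_lt_add_one _]

lemma sq_sqrt_of_irrational (hD : Irrational √(D : ℝ)) : √(D : ℝ) ^ 2 = D :=
  Real.sq_sqrt (by exact_mod_cast (irrational_sqrt_intCast_iff.1 hD).2)

lemma value_step (hD : Irrational √(D : ℝ)) (hQ : s.2 ≠ 0) (hdvd : s.2 ∣ s.1 ^ 2 - D) :
    value D (step D s) = 1 / (digit D s - value D s) :=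
  step_div_eq hD (sq_sqrt_of_irrational hD) hQ hdvd

lemma conjValue_step (hD : Irrational √(D : ℝ)) (hQ : s.2 ≠ 0) (hdvd : s.2 ∣ s.1 ^ 2 - D) :
    conjValue D (step D s) = 1 / (digit D s - conjValue D s) := by
  simpa only [conjValue, sub_eq_add_neg] using
    step_div_eq hD.neg (by rw [neg_sq, sq_sqrt_of_irrational hD]) hQ hdvd

lemma value_lt_digit (hD : Irrational √(D : ℝ)) (hQ : s.2 ≠ 0) : value D s < digit D s :=
  (Int.le_ceil _).lt_of_ne (((hD.intCast_add s.1).div_intCast hQ).ne_int _)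

namespace Reduced

lemma two_le_digit (hD : Irrational √(D : ℝ)) (h : Reduced D s) : 2 ≤ digit D s := by
  have : (1 : ℝ) < digit D s := h.one_lt_value.trans (value_lt_digit hD h.snd_pos.ne')
  exact_mod_cast this

lemma digit_eq_ceil_inv (hD : Irrational √(D : ℝ)) (h : Reduced D s) :
    digit D s = ⌈(conjValue D (step D s))⁻¹⌉ := by
  rw [conjValue_step hD h.snd_pos.ne' h.dvd, one_div, inv_inv, eq_comm, Int.ceil_eq_iff]
  constructor <;> linarith [h.conjValue_pos, h.conjValue_lt_one]

lemma mem_Icc (hD : Irrational √(D : ℝ)) (h : Reduced D s) :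
    s ∈ Set.Icc ((0 : ℤ), (0 : ℤ)) (2 * D, D) := by
  have hQ : (0 : ℝ) < s.2 := by exact_mod_cast h.snd_pos
  have hsq := sq_sqrt_of_irrational hD
  have hs0 := Real.sqrt_nonneg (D : ℝ)
  have h1 : (s.2 : ℝ) < s.1 + √D := (one_lt_div hQ).1 h.one_lt_value
  have h2 : 0 < (s.1 : ℝ) - √D := (div_pos_iff_of_pos_right hQ).1 h.conjValue_pos
  have h3 : (s.1 : ℝ) - √D < s.2 := (div_lt_one hQ).1 h.conjValue_lt_one
  -- `Q` divides `D - (P - Q)²`, which is positive because `|P - Q| < √D`.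
  have hr : (s.1 - s.2) ^ 2 < D := by
    have : ((s.1 - s.2 : ℤ) : ℝ) ^ 2 < D := by push_cast; nlinarith
    exact_mod_cast this
  have hdvd : s.2 ∣ D - (s.1 - s.2) ^ 2 := by
    have : D - (s.1 - s.2) ^ 2 = s.2 * (2 * s.1 - s.2) - (s.1 ^ 2 - D) := by ring
    rw [this]
    exact (dvd_mul_right _ _).sub h.dvd
  have hQD : s.2 ≤ D := (Int.le_of_dvd (by omega) hdvd).trans (by nlinarith)
  have hPD : (s.1 : ℝ) < 2 * D := by
    have : (1 : ℝ) ≤ D := by exact_mod_cast h.snd_pos.trans_le hQD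
    have : (s.2 : ℝ) ≤ D := by exact_mod_cast hQD
    nlinarith
  have hP : 0 < s.1 := by exact_mod_cast (by linarith : (0 : ℝ) < s.1)
  have hP' : s.1 < 2 * D := by exact_mod_cast hPD
  exact ⟨⟨hP.le, h.snd_pos.le⟩, ⟨hP'.le, hQD⟩⟩

end Reduced

lemma reduced_step (hD : Irrational √(D : ℝ)) (h : Reduced D s) : Reduced D (step D s) := by
  have hQ := h.snd_pos.ne'
  have hv := value_lt_digit hD hQ
  have hv' := digit_sub_one_lt_value (D := D) (s := s)
  have hb : (2 : ℝ) ≤ digit D s := by exact_mod_cast h.two_le_digit hD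
  have hc0 := h.conjValue_pos
  have hc1 := h.conjValue_lt_one
  have hval : 1 < value D (step D s) := by
    rw [value_step hD hQ h.dvd, lt_div_iff₀ (by linarith)]; linarith
  have hconj : 0 < conjValue D (step D s) ∧ conjValue D (step D s) < 1 := by
    rw [conjValue_step hD hQ h.dvd, div_lt_one (by linarith)]
    exact ⟨one_div_pos.2 (by linarith), by linarith⟩
  have hpos : 0 < (step D s).2 := by
    have hsub : 0 < value D (step D s) - conjValue D (step D s) := by linarith
    rw [value, conjValue, ← sub_div, add_sub_sub_cancel] at hsub
    have h2 := (div_pos_iff.1 hsub).resolve_right fun h => by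
      linarith [Real.sqrt_nonneg (D : ℝ), h.1]
    exact_mod_cast h2.2
  exact ⟨hpos, Dvd.intro_left _ (mul_step_snd h.dvd), hval, hconj.1, hconj.2⟩

lemma mapsTo_step (hD : Irrational √(D : ℝ)) :
    Set.MapsTo (step D) {s | Reduced D s} {s | Reduced D s} :=
  fun _ h => reduced_step hD h

lemma injOn_step (hD : Irrational √(D : ℝ)) : Set.InjOn (step D) {s | Reduced D s} := by
  intro s (hs : Reduced D s) t (ht : Reduced D t) hst
  have hdigit : digit D s = digit D t := by
    rw [hs.digit_eq_ceil_inv hD, ht.digit_eq_ceil_inv hD, hst]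
  have hQ' : (step D t).2 ≠ 0 := (reduced_step hD ht).snd_pos.ne'
  have hsnd : s.2 = t.2 := by
    refine mul_right_cancel₀ hQ' ?_
    rw [← hst, mul_step_snd hs.dvd, hst, mul_step_snd ht.dvd]
  have hfst : digit D s * s.2 - s.1 = digit D t * t.2 - t.1 := congrArg Prod.fst hst
  rw [hdigit, hsnd] at hfst
  exact Prod.ext (by omega) hsnd

lemma finite_setOf_reduced (hD : Irrational √(D : ℝ)) : {s | Reduced D s}.Finite :=
  (Set.finite_Icc _ _).subset fun _ h => Reduced.mem_Icc hD h

lemma Reduced.exists_iterate_eq (hD : Irrational √(D : ℝ)) (h : Reduced D s) :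
    ∃ m, 0 < m ∧ (step D)^[m] s = s := by
  have : Finite {s | Reduced D s} := (finite_setOf_reduced hD).to_subtype
  obtain ⟨m, hm, hper⟩ :=
    ((mapsTo_step hD).restrict_inj.2 (injOn_step hD)).mem_periodicPts ⟨s, h⟩
  exact ⟨m, hm, by simpa [(mapsTo_step hD).coe_iterate_restrict] using congrArg Subtype.val hper.eq⟩

lemma Reduced.exists_periodic_mcfConv (hD : Irrational √(D : ℝ)) (h : Reduced D s) :
    ∃ (b : ℕ → ℤ) (m : ℕ), 0 < m ∧ (∀ i, 2 ≤ b i) ∧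
      Tendsto (mcfConv b) atTop (𝓝 (value D s)) ∧ ∀ k, b (k + m) = b k := by
  have horbit : ∀ k, Reduced D ((step D)^[k] s) := fun k => (mapsTo_step hD).iterate k h
  obtain ⟨m, hm, hper⟩ := h.exists_iterate_eq hD
  obtain ⟨s₀, hs₀, hmin⟩ :=
    Set.exists_min_image _ (value D) (finite_setOf_reduced hD) ⟨s, h⟩
  refine ⟨fun k => digit D ((step D)^[k] s), m, hm, fun k => (horbit k).two_le_digit hD,
    tendsto_mcfConv_of_tails (w := fun k => value D ((step D)^[k] s))
      (Reduced.one_lt_value hs₀) (fun k => hmin _ (horbit k)) fun k => ?_,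
    fun k => by simp only [Function.iterate_add_apply, hper]⟩
  have hk := horbit k
  rw [Function.iterate_succ_apply', value_step hD hk.snd_pos.ne' hk.dvd, one_div_one_div]
  ring

lemma exists_value_eq {d : ℕ} (hd : Irrational √(d : ℝ)) (x : ℚ) {y : ℚ} (hy : 0 < y) :
    ∃ (D : ℤ) (s : ℤ × ℤ), Irrational √(D : ℝ) ∧ 0 < s.2 ∧ s.2 ∣ s.1 ^ 2 - D ∧
      value D s = x + y * √d ∧ conjValue D s = x - y * √d := by
  set c : ℤ := x.den * y.den
  set a : ℤ := x.num * y.den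
  set e : ℤ := y.num * x.den
  have hc : 0 < c := by positivity
  have he : 0 < e := mul_pos (Rat.num_pos.2 hy) (by positivity)
  have hxc : (x : ℝ) * c = a := by
    have : x * c = a := by
      simp only [c, a, Int.cast_mul, Int.cast_natCast, ← mul_assoc, Rat.mul_den_eq_num]
    exact_mod_cast this
  have hyc : (y : ℝ) * c = e := by
    have : y * c = e := by
      simp only [c, e, Int.cast_mul, Int.cast_natCast]
      rw [mul_comm (x.den : ℚ), ← mul_assoc, Rat.mul_den_eq_num]
    exact_mod_cast this
  have hsqrt : √(((e * c) ^ 2 * d : ℤ) : ℝ) = e * c * √d := by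
    push_cast
    rw [Real.sqrt_mul (by positivity), Real.sqrt_sq (by positivity)]
  have hcR : (c : ℝ) ≠ 0 := by positivity
  refine ⟨(e * c) ^ 2 * d, (a * c, c ^ 2), ?_, by positivity, ⟨a ^ 2 - e ^ 2 * d, by ring⟩, ?_, ?_⟩
  · rw [hsqrt]; exact_mod_cast hd.intCast_mul (mul_pos he hc).ne'
  · rw [value, hsqrt]; field_simp; push_cast; rw [← hxc, ← hyc]; ring
  · rw [conjValue, hsqrt]; field_simp; push_cast; rw [← hxc, ← hyc]; ring

lemma exists_periodic_of_reduced {d : ℕ} (hd : Irrational √(d : ℝ)) {x y : ℚ}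
    (h1 : 1 < x + y * √d) (h2 : 0 < x - y * √d) (h3 : x - y * √d < 1) :
    ∃ (b : ℕ → ℤ) (m : ℕ), 0 < m ∧ (∀ i, 2 ≤ b i) ∧
      Tendsto (mcfConv b) atTop (𝓝 (x + y * √d)) ∧ ∀ k, b (k + m) = b k := by
  have hy : 0 < y := by
    have : 0 < (y : ℝ) * √d := by linarith
    exact_mod_cast pos_of_mul_pos_left this (Real.sqrt_nonneg _)
  obtain ⟨D, s, hD, hQ, hdvd, hval, hconj⟩ := exists_value_eq hd x hy
  rw [← hval] at h1 ⊢
  rw [← hconj] at h2 h3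
  exact Reduced.exists_periodic_mcfConv hD ⟨hQ, hdvd, h1, h2, h3⟩

end MinusCF

/-- A real quadratic irrational `ϖ = x + y√d` with Galois conjugate
    `ϖ' = x − y√d` satisfies `ϖ > 1 > ϖ' > 0` if and only if its minus
    continued fraction expansion is purely periodic. -/
theorem minus_cf_purely_periodic_iff (d : ℕ) (hd : ¬ IsSquare (d : ℤ))
    (x y : ℚ) (hy : y ≠ 0) (ϖ ϖ' : ℝ)
    (hϖ : ϖ = (x : ℝ) + (y : ℝ) * Real.sqrt d)
    (hϖ' : ϖ' = (x : ℝ) - (y : ℝ) * Real.sqrt d) :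
    (ϖ > 1 ∧ 1 > ϖ' ∧ ϖ' > 0) ↔
      ∃ (b : ℕ → ℤ) (m : ℕ), 0 < m ∧ (∀ i, 1 ≤ i → 2 ≤ b i) ∧
        Filter.Tendsto (mcfConv b) Filter.atTop (nhds ϖ) ∧
        ∀ k, b (k + m) = b k := by
  have hdirr : Irrational √(d : ℝ) := by
    simpa using (irrational_sqrt_intCast_iff_of_nonneg (Int.natCast_nonneg d)).2 hd
  subst hϖ hϖ'
  constructor
  · rintro ⟨h1, h2, h3⟩
    obtain ⟨b, m, hm, hb, hlim, hper⟩ := MinusCF.exists_periodic_of_reduced hdirr h1 h3 h2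
    exact ⟨b, m, hm, fun i _ => hb i, hlim, hper⟩
  · rintro ⟨b, m, hm, hb, hlim, hper⟩
    have hb' : ∀ i, 2 ≤ b i
      | 0 => by rw [← hper 0, zero_add]; exact hb m hm
      | i + 1 => hb (i + 1) (by omega)
    exact reduced_of_periodic hdirr hy hm hb' hper hlim
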